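/- arXiv:1202.2977 — 2 statements merged into one kernel-verified Lean document; each statement's English description precedes it below -/
import Mathlib

section
/- Let φ : T_OP(X, X') → T_OP(Y, Y') be a semigroup isomorphism with induced map θ_φ. If α ∈ T_OP(X, X'), a ∈ ran α and aα⁻¹ ∩ X' ≠ ∅, then ā ∈ ran(φ(α)) and ā(φ(α))⁻¹ ∩ Y' = θ_φ(aα⁻¹ ∩ X'). -/
/-!
Composing `α` with the constant map at `b ∈ X'` gives the constant map at `α b`, so
multiplicativity of `φ` and `φ(X_b) = Y_{b̄}` yield `φ(α)(b̄) = (α b)‾` for every `b ∈ X'`: the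
bijection `θ_φ : X' → Y'` semiconjugates `α` to `φ(α)`. Both claims follow from this, the
description of the fibre using that `θ_φ` is injective on `X'`.
-/

open Set Function

/-- The semigroup of order-preserving self-maps of `X` with range contained in `X'`. -/
def OPR {X : Type*} [LinearOrder X] (X' : Set X) : Set (X → X) :=
  {f | Monotone f ∧ Set.range f ⊆ X'}

/-- `φ` is a semigroup isomorphism from `T_OP(X, X')` onto `T_OP(Y, Y')`
(composition written left-to-right: `f * g = g ∘ f`). -/
def IsSgIso {X Y : Type*} [LinearOrder X] [LinearOrder Y] (X' : Set X) (Y' : Set Y)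
    (φ : (X → X) → (Y → Y)) : Prop :=
  Set.BijOn φ (OPR X') (OPR Y') ∧
    ∀ f ∈ OPR X', ∀ g ∈ OPR X', φ (g ∘ f) = φ g ∘ φ f

lemma const_mem_OPR {X : Type*} [LinearOrder X] {X' : Set X} {a : X} (ha : a ∈ X') :
    const X a ∈ OPR X' :=
  ⟨monotone_const, range_subset_iff.2 fun _ => ha⟩

lemma IsSgIso.apply_eq_of_map_const {X Y : Type*} [LinearOrder X] [LinearOrder Y]
    {X' : Set X} {Y' : Set Y} {φ : (X → X) → (Y → Y)} (hφ : IsSgIso X' Y' φ) {θ : X → Y}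
    (hθ : ∀ a ∈ X', φ (const X a) = const Y (θ a)) {α : X → X} (hα : α ∈ OPR X')
    {b : X} (hb : b ∈ X') : φ α (θ b) = θ (α b) := by
  have hαb : α b ∈ X' := hα.2 (mem_range_self b)
  have hcomp : φ (α ∘ const X b) = φ α ∘ φ (const X b) := hφ.2 _ (const_mem_OPR hb) α hα
  rw [comp_const, hθ _ hαb, hθ _ hb, comp_const] at hcomp
  exact (congrFun hcomp (θ b)).symm

lemma preimage_singleton_inter_eq_image_of_semiconj {X Y : Type*} {X' : Set X} {Y' : Set Y}
    {θ : X → Y} (hθ : BijOn θ X' Y') {g : X → X} (hg : MapsTo g X' X') {f : Y → Y}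
    (hfg : ∀ x ∈ X', f (θ x) = θ (g x)) {a : X} (ha : a ∈ X') :
    f ⁻¹' {θ a} ∩ Y' = θ '' (g ⁻¹' {a} ∩ X') := by
  ext y
  constructor
  · rintro ⟨hfy, hy⟩
    obtain ⟨x, hx, rfl⟩ := hθ.surjOn hy
    have hθgx : θ (g x) = θ a := (hfg x hx).symm.trans hfy
    exact ⟨x, ⟨hθ.injOn (hg hx) ha hθgx, hx⟩, rfl⟩
  · rintro ⟨x, ⟨hgx, hx⟩, rfl⟩
    refine ⟨?_, hθ.mapsTo hx⟩
    rw [mem_preimage, hfg x hx, mem_singleton_iff.1 hgx, mem_singleton_iff]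

theorem stmt_7_general {X Y : Type*} [LinearOrder X] [LinearOrder Y] (X' : Set X) (Y' : Set Y)
    (φ : (X → X) → (Y → Y)) (hφ : IsSgIso X' Y' φ)
    (θ : X → Y) (hbij : Set.BijOn θ X' Y')
    (hθ : ∀ a ∈ X', φ (Function.const X a) = Function.const Y (θ a)) :
    ∀ α ∈ OPR X', ∀ a ∈ Set.range α, (α ⁻¹' {a} ∩ X').Nonempty →
      θ a ∈ Set.range (φ α) ∧ φ α ⁻¹' {θ a} ∩ Y' = θ '' (α ⁻¹' {a} ∩ X') := by
  rintro α hα a - ⟨b, hba, hb⟩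
  have hsemiconj : ∀ x ∈ X', φ α (θ x) = θ (α x) := fun x hx =>
    hφ.apply_eq_of_map_const hθ hα hx
  have ha : a ∈ X' := hba ▸ hα.2 (mem_range_self b)
  refine ⟨⟨θ b, by rw [hsemiconj b hb, hba]⟩, ?_⟩
  exact preimage_singleton_inter_eq_image_of_semiconj hbij
    (fun x _ => hα.2 (mem_range_self x)) hsemiconj ha

/-- if `a ∈ ran α` and `aα⁻¹ ∩ X' ≠ ∅` then `ā ∈ ran(φ(α))` and
`ā(φ(α))⁻¹ ∩ Y' = θ_φ(aα⁻¹ ∩ X')`. -/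
theorem stmt_7 {X Y : Type*} [LinearOrder X] [LinearOrder Y] (X' : Set X) (Y' : Set Y)
    (hX' : X'.Nontrivial) (hY' : Y'.Nontrivial)
    (φ : (X → X) → (Y → Y)) (hφ : IsSgIso X' Y' φ)
    (θ : X → Y) (hbij : Set.BijOn θ X' Y')
    (hθ : ∀ a ∈ X', φ (Function.const X a) = Function.const Y (θ a)) :
    ∀ α ∈ OPR X', ∀ a ∈ Set.range α, (α ⁻¹' {a} ∩ X').Nonempty →
      θ a ∈ Set.range (φ α) ∧ φ α ⁻¹' {θ a} ∩ Y' = θ '' (α ⁻¹' {a} ∩ X') :=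
  stmt_7_general X' Y' φ hφ θ hbij hθ
end

section
/- Let φ : T_OP(X, X') → T_OP(Y, Y') be a semigroup isomorphism with induced map θ_φ. Then for every α ∈ T_OP(X, X') (not just idempotents), θ_φ(ran α) = ran(φ(α)), and for every a ∈ ran α, ā(φ(α))⁻¹ ∩ Y' = θ_φ(aα⁻¹ ∩ X'). -/
/-!
Constants let `θ` intertwine the action of `φ` on `X'` and `Y'`: `φ g (θ a) = θ (g a)`.
In `T_OP(Z, Z')` membership of `b` in the range of `f` is detected by right cancellation: `b ∉ ran f`
exactly when the two step maps jumping just before and just after `b` agree after `f` yet differ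
at `b`. Since `φ` is an isomorphism and `θ` intertwines evaluation, this criterion is transported
from `α` to `φ α`, and the fibres of `φ α` are the `θ`-images of those of `α`.
-/

open Set Function

lemma Set.BijOn.image_eq_of_forall_mem_iff {α β : Type*} {f : α → β} {s A : Set α}
    {t B : Set β} (h : BijOn f s t) (hA : A ⊆ s) (hB : B ⊆ t)
    (hAB : ∀ a ∈ s, a ∈ A ↔ f a ∈ B) : f '' A = B := by
  have hA_eq : A = s ∩ f ⁻¹' B :=
    ext fun a => ⟨fun ha => ⟨hA ha, (hAB a (hA ha)).1 ha⟩, fun ha => (hAB a ha.1).2 ha.2⟩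
  rw [hA_eq, image_inter_preimage, h.image_eq, inter_eq_right.2 hB]

section OPR

variable {Z : Type*} [LinearOrder Z] {Z' : Set Z}

lemma comp_mem_OPR {f g : Z → Z} (hg : g ∈ OPR Z') (hf : f ∈ OPR Z') : g ∘ f ∈ OPR Z' :=
  ⟨hg.1.comp hf.1, (range_comp_subset_range f g).trans hg.2⟩

lemma const_mem_OPR_s9 {a : Z} (ha : a ∈ Z') : const Z a ∈ OPR Z' :=
  ⟨monotone_const, range_subset_iff.2 fun _ => ha⟩

lemma ite_mem_OPR {s : Set Z} [DecidablePred (· ∈ s)] (hs : IsLowerSet s) {u v : Z}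
    (hu : u ∈ Z') (hv : v ∈ Z') (huv : u ≤ v) : (fun w => if w ∈ s then u else v) ∈ OPR Z' := by
  refine ⟨fun w w' hww' => ?_, range_subset_iff.2 fun w => ?_⟩
  · by_cases hw' : w' ∈ s
    · simp [hw', hs hww' hw']
    · by_cases hw : w ∈ s <;> simp [hw, hw', huv]
  · split_ifs <;> assumption

lemma mem_range_iff_forall_comp_eq (hZ' : Z'.Nontrivial) {W : Type*} (f : W → Z) (b : Z) :
    b ∈ range f ↔ ∀ g₁ ∈ OPR Z', ∀ g₂ ∈ OPR Z', g₁ ∘ f = g₂ ∘ f → g₁ b = g₂ b := by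
  refine ⟨fun ⟨x, hx⟩ g₁ _ g₂ _ h => hx ▸ congrFun h x, fun h => ?_⟩
  by_contra hb
  obtain ⟨u, hu, v, hv, huv⟩ := hZ'.exists_lt
  have hcomp : (fun w => if w ∈ Iic b then u else v) ∘ f =
      (fun w => if w ∈ Iio b then u else v) ∘ f := by
    funext x
    have hfx : f x ≠ b := fun hx => hb ⟨x, hx⟩
    simp [le_iff_lt_or_eq, hfx]
  have := h _ (ite_mem_OPR (isLowerSet_Iic b) hu hv huv.le)
    _ (ite_mem_OPR (isLowerSet_Iio b) hu hv huv.le) hcomp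
  simp [huv.ne] at this

end OPR

namespace IsSgIso

variable {X Y : Type*} [LinearOrder X] [LinearOrder Y] {X' : Set X} {Y' : Set Y}
  {φ : (X → X) → (Y → Y)} {θ : X → Y}

lemma apply_apply_eq (hφ : IsSgIso X' Y' φ)
    (hθ : ∀ a ∈ X', φ (const X a) = const Y (θ a)) {g : X → X} (hg : g ∈ OPR X') {a : X}
    (ha : a ∈ X') : φ g (θ a) = θ (g a) := by
  have hconst := hφ.2 _ (const_mem_OPR_s9 ha) g hg
  rw [show g ∘ const X a = const X (g a) from rfl, hθ _ (hg.2 ⟨a, rfl⟩), hθ a ha] at hconst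
  exact (congrFun hconst (θ a)).symm

lemma mem_range_iff (hX' : X'.Nontrivial) (hY' : Y'.Nontrivial) (hφ : IsSgIso X' Y' φ)
    (hθinj : InjOn θ X') (hθ : ∀ a ∈ X', φ (const X a) = const Y (θ a)) {α : X → X}
    (hα : α ∈ OPR X') {a : X} (ha : a ∈ X') : a ∈ range α ↔ θ a ∈ range (φ α) := by
  rw [mem_range_iff_forall_comp_eq hX', mem_range_iff_forall_comp_eq hY', ← hφ.1.image_eq]
  simp only [forall_mem_image]
  refine forall₂_congr fun g₁ hg₁ => forall₂_congr fun g₂ hg₂ => ?_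
  rw [← hφ.2 α hα g₁ hg₁, ← hφ.2 α hα g₂ hg₂,
    hφ.1.injOn.eq_iff (comp_mem_OPR hg₁ hα) (comp_mem_OPR hg₂ hα),
    hφ.apply_apply_eq hθ hg₁ ha, hφ.apply_apply_eq hθ hg₂ ha,
    hθinj.eq_iff (hg₁.2 ⟨a, rfl⟩) (hg₂.2 ⟨a, rfl⟩)]

end IsSgIso

/-- for every `α ∈ T_OP(X, X')`, `θ_φ(ran α) = ran(φ(α))` and for every
`a ∈ ran α`, `ā(φ(α))⁻¹ ∩ Y' = θ_φ(aα⁻¹ ∩ X')`. -/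
theorem stmt_9 {X Y : Type*} [LinearOrder X] [LinearOrder Y] (X' : Set X) (Y' : Set Y)
    (hX' : X'.Nontrivial) (hY' : Y'.Nontrivial)
    (φ : (X → X) → (Y → Y)) (hφ : IsSgIso X' Y' φ)
    (θ : X → Y) (hbij : Set.BijOn θ X' Y')
    (hθ : ∀ a ∈ X', φ (Function.const X a) = Function.const Y (θ a)) :
    ∀ α ∈ OPR X',
      θ '' Set.range α = Set.range (φ α) ∧
      ∀ a ∈ Set.range α, φ α ⁻¹' {θ a} ∩ Y' = θ '' (α ⁻¹' {a} ∩ X') := by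
  intro α hα
  have hφα : φ α ∈ OPR Y' := hφ.1.mapsTo hα
  refine ⟨hbij.image_eq_of_forall_mem_iff hα.2 hφα.2 fun a ha =>
    hφ.mem_range_iff hX' hY' hbij.injOn hθ hα ha, fun a ha => ?_⟩
  refine (hbij.image_eq_of_forall_mem_iff inter_subset_right inter_subset_right
    fun x hx => ?_).symm
  simp only [mem_inter_iff, mem_preimage, mem_singleton_iff, hx, hbij.mapsTo hx, and_true,
    hφ.apply_apply_eq hθ hα hx, hbij.injOn.eq_iff (hα.2 ⟨x, rfl⟩) (hα.2 ha)]
end
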